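/- Let M_m := {1 - 1/k : k a positive integer} ∪ {α ∈ ℚ : 6/7 ≤ α ≤ 1}. Let s ≥ 1, let b₁,…,b_s ∈ M_m and let r₁,…,r_s be positive integers, let r be a nonnegative integer, and suppose that 6/7 < b₁ < 1. Then r + ∑_{j=1}^{s} r_j·b_j ≠ 2. -/
import Mathlib


/-- Shokurov's extended coefficient set `M_m = {1 - 1/k} ∪ [6/7, 1]`. -/
def Mm : Set ℚ :=
  {α : ℚ | ∃ k : ℕ, 0 < k ∧ α = 1 - 1 / (k : ℚ)} ∪ {α : ℚ | 6 / 7 ≤ α ∧ α ≤ 1}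

/-- The set of possible values of sums `n + ∑ r_j b_j`. -/
def Aset (x : ℚ) : Prop := x = 0 ∨ x = 1/2 ∨ (2/3 ≤ x ∧ x ≤ 1) ∨ 8/7 ≤ x

lemma Aset_nonneg {x : ℚ} (hx : Aset x) : 0 ≤ x := by
  rcases hx with h|h|⟨h,_⟩|h <;> linarith

lemma Aset_add {x y : ℚ} (hx : Aset x) (hy : Aset y) : Aset (x + y) := by
  unfold Aset at *
  rcases hx with h|h|⟨h1,h2⟩|h <;> rcases hy with g|g|⟨g1,g2⟩|g <;>
    first
      | (left; linarith)
      | (right; left; linarith)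
      | (right; right; left; constructor <;> linarith)
      | (right; right; right; linarith)

lemma Aset_nat (n : ℕ) : Aset (n : ℚ) := by
  induction n with
  | zero => left; norm_num
  | succ m ih =>
      push_cast
      exact Aset_add ih (by right; right; left; norm_num)

lemma Aset_term {c : ℚ} (hc : c ∈ Mm) {n : ℕ} (hn : 0 < n) : Aset ((n : ℚ) * c) := by
  have hn1 : (1:ℚ) ≤ n := by exact_mod_cast hn
  rcases hc with ⟨k, hk, rfl⟩ | ⟨h1, h2⟩
  · have hkq : (0:ℚ) < k := by exact_mod_cast hk
    rcases Nat.lt_or_ge k 3 with h3 | h3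
    · interval_cases k
      · left; norm_num
      · rcases Nat.lt_or_ge n 3 with hn3 | hn3
        · interval_cases n
          · right; left; norm_num
          · right; right; left; norm_num
        · have hn3q : (3:ℚ) ≤ n := by exact_mod_cast hn3
          right; right; right
          norm_num
          linarith
    · have h3q : (3:ℚ) ≤ k := by exact_mod_cast h3
      have hki : 1/(k:ℚ) ≤ 1/3 := by
        rw [div_le_div_iff₀ hkq (by norm_num)]; linarith
      have hkpos : 0 < 1/(k:ℚ) := by positivity
      rcases Nat.lt_or_ge n 2 with hn2 | hn2
      · interval_cases n
        right; right; left
        constructor <;> [nlinarith; nlinarith]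
      · have hn2q : (2:ℚ) ≤ n := by exact_mod_cast hn2
        right; right; right
        have h23 : (2:ℚ)/3 ≤ 1 - 1/(k:ℚ) := by linarith
        nlinarith
  · rcases Nat.lt_or_ge n 2 with hn2 | hn2
    · interval_cases n
      right; right; left
      norm_num
      constructor <;> linarith
    · have hn2q : (2:ℚ) ≤ n := by exact_mod_cast hn2
      right; right; right
      nlinarith

/-- If `b₁, …, b_s ∈ M_m` with `6/7 < b₁ < 1`, `r₁, …, r_s` are positive integers
and `r ≥ 0`, then `r + ∑ r_j b_j ≠ 2`. -/
theorem no_degree_two_different (s : ℕ) (hs : 1 ≤ s) (b : Fin s → ℚ)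
    (hb : ∀ j, b j ∈ Mm) (r : Fin s → ℕ) (hr : ∀ j, 0 < r j) (rr : ℕ)
    (hb1 : 6 / 7 < b ⟨0, hs⟩) (hb1' : b ⟨0, hs⟩ < 1) :
    (rr : ℚ) + ∑ j, (r j : ℚ) * b j ≠ 2 := by
  intro h
  set i0 : Fin s := ⟨0, hs⟩ with hi0
  have hsplit : ∑ j, (r j : ℚ) * b j
      = (r i0 : ℚ) * b i0 + ∑ j ∈ Finset.univ.erase i0, (r j : ℚ) * b j :=
    (Finset.add_sum_erase _ _ (Finset.mem_univ i0)).symm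
  set S : ℚ := (rr : ℚ) + ∑ j ∈ Finset.univ.erase i0, (r j : ℚ) * b j with hS
  have hAS : Aset S := by
    apply Aset_add (Aset_nat rr)
    apply Finset.sum_induction _ _ (fun a b ha hb => Aset_add ha hb) (by left; rfl)
    intro j _
    exact Aset_term (hb j) (hr j)
  have htot : (r i0 : ℚ) * b i0 + S = 2 := by
    rw [hS]; rw [hsplit] at h; linarith
  rcases Nat.lt_or_ge (r i0) 3 with h3 | h3
  · have h12 : r i0 = 1 ∨ r i0 = 2 := by have := hr i0; omega
    rcases h12 with h12 | h12 <;> rw [h12] at htot <;> push_cast at htot <;>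
      rcases hAS with g|g|⟨g1,g2⟩|g <;> linarith
  · have h3q : (3:ℚ) ≤ r i0 := by exact_mod_cast h3
    have hSpos := Aset_nonneg hAS
    nlinarith
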